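/- Let V : ℝ → ℝ be defined by V(q) := −(1/2)/√(q² + 2(q − 1/2)²) − (1/2)/√((q − 1)² + 2(q − 1/2)²) + 2. Then V(1/2) = 0, V′(1/2) = 0, V″(1/2) = 0, V‴(1/2) = 0, and V⁗(1/2) = 2688. -/

import Mathlib

/-!
On the tangent line `q₂ = √2 (q - 1/2)`, write `t = q - 1/2`. The squared distances to the two
primaries are `3t² ± t + 1/4`, so `V(1/2 + t) = 2 - (g₊(t) + g₋(t))/2` with
`g_s(t) = (3t² + s t + 1/4)^(-1/2)`. The inverse square root `g` of a quadratic `Q` satisfies the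
linear ODE `2Qg' + Q'g = 0`; differentiating it repeatedly (and using `Q''' = 0`) gives a
three-term recurrence that determines the Taylor coefficients of `g_s` at `0` from `g_s(0) = 2`.
They are polynomials in `s` of the parity of their order, so in `g₊ + g₋` the odd ones cancel and
the even ones are read off at `s² = 1`.
-/

open Real

section Quadratic

variable {a b c : ℝ}

lemma quadratic_pos_of_discrim_neg (ha : 0 < a) (hd : discrim a b c < 0) (x : ℝ) :
    0 < a * x ^ 2 + b * x + c := by
  rw [discrim] at hd
  nlinarith [sq_nonneg (2 * a * x + b)]

lemma hasDerivAt_quadratic (x : ℝ) :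
    HasDerivAt (fun y => a * y ^ 2 + b * y + c) (2 * a * x + b) x := by
  refine ((((hasDerivAt_pow 2 x).const_mul a).add ((hasDerivAt_id' x).const_mul b)).add_const
    c).congr_deriv ?_
  norm_num
  ring

lemma hasDerivAt_linear (x : ℝ) : HasDerivAt (fun y => 2 * a * y + b) (2 * a) x := by
  simpa using ((hasDerivAt_id x).const_mul (2 * a)).add_const b

lemma eq_zero_of_hasDerivAt_of_forall_eq_zero {g : ℝ → ℝ} {g' x : ℝ} (hg : HasDerivAt g g' x)
    (h : ∀ y, g y = 0) : g' = 0 := by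
  obtain rfl : g = fun _ => 0 := funext h
  exact hg.unique (hasDerivAt_const x 0)

lemma ContDiff.hasDerivAt_iteratedDeriv {f : ℝ → ℝ} (hf : ContDiff ℝ ⊤ f) (n : ℕ) (x : ℝ) :
    HasDerivAt (iteratedDeriv n f) (iteratedDeriv (n + 1) f x) x := by
  rw [iteratedDeriv_succ]
  exact ((hf.differentiable_iteratedDeriv n (WithTop.coe_lt_top _)) x).hasDerivAt

theorem iteratedDeriv_recurrence_of_ode {f : ℝ → ℝ} (hf : ContDiff ℝ ⊤ f)
    (hode : ∀ x, 2 * (a * x ^ 2 + b * x + c) * deriv f x + (2 * a * x + b) * f x = 0)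
    (n : ℕ) (x : ℝ) :
    2 * (a * x ^ 2 + b * x + c) * iteratedDeriv (n + 2) f x
      + (2 * n + 3) * (2 * a * x + b) * iteratedDeriv (n + 1) f x
      + (n + 1) ^ 2 * (2 * a) * iteratedDeriv n f x = 0 := by
  have hD := hf.hasDerivAt_iteratedDeriv
  induction n generalizing x with
  | zero =>
    have := eq_zero_of_hasDerivAt_of_forall_eq_zero
      ((((hasDerivAt_quadratic x).const_mul 2).mul (hD 1 x)).add
        ((hasDerivAt_linear x).mul (hD 0 x)))
      fun y => by rw [iteratedDeriv_one, iteratedDeriv_zero]; exact hode y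
    push_cast
    linear_combination this
  | succ n ih =>
    have := eq_zero_of_hasDerivAt_of_forall_eq_zero
      (((((hasDerivAt_quadratic x).const_mul 2).mul (hD (n + 2) x)).add
        (((hasDerivAt_linear x).const_mul (2 * (n : ℝ) + 3)).mul (hD (n + 1) x))).add
          ((hD n x).const_mul (((n : ℝ) + 1) ^ 2 * (2 * a)))) ih
    push_cast
    linear_combination this

end Quadratic

noncomputable def invSqrtQuadratic (a b c x : ℝ) : ℝ := (√(a * x ^ 2 + b * x + c))⁻¹

section InvSqrtQuadratic

variable {a b c : ℝ}

lemma contDiff_invSqrtQuadratic (hQ : ∀ x, 0 < a * x ^ 2 + b * x + c) :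
    ContDiff ℝ ⊤ (invSqrtQuadratic a b c) :=
  (ContDiff.sqrt (by fun_prop) fun x => (hQ x).ne').inv fun x => (sqrt_pos.2 (hQ x)).ne'

lemma invSqrtQuadratic_ode (hQ : ∀ x, 0 < a * x ^ 2 + b * x + c) (x : ℝ) :
    2 * (a * x ^ 2 + b * x + c) * deriv (invSqrtQuadratic a b c) x
      + (2 * a * x + b) * invSqrtQuadratic a b c x = 0 := by
  have hpos := sqrt_pos.2 (hQ x)
  have hd : HasDerivAt (invSqrtQuadratic a b c) _ x :=
    ((hasDerivAt_quadratic x).sqrt (hQ x).ne').inv hpos.ne'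
  rw [hd.deriv, invSqrtQuadratic]
  have hsq := sq_sqrt (hQ x).le
  generalize √(a * x ^ 2 + b * x + c) = r at hpos hsq ⊢
  rw [← hsq]
  field_simp
  ring

end InvSqrtQuadratic

lemma quadratic_three_quarter_pos {s : ℝ} (hs : s ^ 2 < 3) (t : ℝ) :
    0 < 3 * t ^ 2 + s * t + 1 / 4 :=
  quadratic_pos_of_discrim_neg three_pos (by rw [discrim]; linarith) t

theorem invSqrtQuadratic_taylor_at_zero {s : ℝ} (hs : s ^ 2 < 3) :
    invSqrtQuadratic 3 s (1 / 4) 0 = 2 ∧ deriv (invSqrtQuadratic 3 s (1 / 4)) 0 = -4 * s ∧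
      iteratedDeriv 2 (invSqrtQuadratic 3 s (1 / 4)) 0 = 24 * s ^ 2 - 24 ∧
      iteratedDeriv 3 (invSqrtQuadratic 3 s (1 / 4)) 0 = -240 * s ^ 3 + 432 * s ∧
      iteratedDeriv 4 (invSqrtQuadratic 3 s (1 / 4)) 0 = 3360 * s ^ 4 - 8640 * s ^ 2 + 2592 := by
  have hQ := quadratic_three_quarter_pos hs
  have h0 : invSqrtQuadratic 3 s (1 / 4) 0 = 2 := by
    rw [invSqrtQuadratic, show (3 * 0 ^ 2 + s * 0 + 1 / 4 : ℝ) = 2⁻¹ ^ 2 by ring,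
      sqrt_sq (by norm_num), inv_inv]
  have hode := invSqrtQuadratic_ode hQ 0
  have hrec := iteratedDeriv_recurrence_of_ode (contDiff_invSqrtQuadratic hQ)
    (invSqrtQuadratic_ode hQ)
  have r0 := hrec 0 0
  have r1 := hrec 1 0
  have r2 := hrec 2 0
  simp only [iteratedDeriv_one, iteratedDeriv_zero] at r0 r1
  norm_num at hode r0 r1 r2
  have h1 : deriv (invSqrtQuadratic 3 s (1 / 4)) 0 = -4 * s := by
    linear_combination 2 * hode - 2 * s * h0
  have h2 : iteratedDeriv 2 (invSqrtQuadratic 3 s (1 / 4)) 0 = 24 * s ^ 2 - 24 := by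
    linear_combination 2 * r0 - 6 * s * h1 - 12 * h0
  have h3 : iteratedDeriv 3 (invSqrtQuadratic 3 s (1 / 4)) 0 = -240 * s ^ 3 + 432 * s := by
    linear_combination 2 * r1 - 10 * s * h2 - 48 * h1
  refine ⟨h0, h1, h2, h3, ?_⟩
  linear_combination 2 * r2 - 14 * s * h3 - 108 * h2

lemma iteratedDeriv_const_sub_average_comp_sub_const {f g : ℝ → ℝ} (hf : ContDiff ℝ ⊤ f)
    (hg : ContDiff ℝ ⊤ g) (k x₀ : ℝ) {n : ℕ} (hn : 0 < n) :
    iteratedDeriv n (fun x => k - (f (x - x₀) + g (x - x₀)) / 2) x₀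
      = -(iteratedDeriv n f 0 + iteratedDeriv n g 0) / 2 := by
  rw [iteratedDeriv_comp_sub_const n (fun t => k - (f t + g t) / 2)]
  dsimp only
  rw [sub_self, iteratedDeriv_const_sub hn, iteratedDeriv_neg, iteratedDeriv_div_const,
    iteratedDeriv_fun_add (hf.contDiffAt.of_le le_top) (hg.contDiffAt.of_le le_top)]
  ring

/-- In the equal-mass case, the restriction `V` of `U − c_J` to the tangent line
vanishes to third order at `1/2` and has fourth derivative `2688` there. -/
theorem stmt_15 :
    letI V : ℝ → ℝ := fun q =>
      -(1 / 2) / Real.sqrt (q ^ 2 + 2 * (q - 1 / 2) ^ 2)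
        - (1 / 2) / Real.sqrt ((q - 1) ^ 2 + 2 * (q - 1 / 2) ^ 2) + 2
    V (1 / 2) = 0 ∧ deriv V (1 / 2) = 0 ∧ iteratedDeriv 2 V (1 / 2) = 0 ∧
      iteratedDeriv 3 V (1 / 2) = 0 ∧ iteratedDeriv 4 V (1 / 2) = 2688 := by
  have hV : (fun q : ℝ => -(1 / 2) / √(q ^ 2 + 2 * (q - 1 / 2) ^ 2)
        - (1 / 2) / √((q - 1) ^ 2 + 2 * (q - 1 / 2) ^ 2) + 2)
      = fun q => 2 - (invSqrtQuadratic 3 1 (1 / 4) (q - 1 / 2)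
          + invSqrtQuadratic 3 (-1) (1 / 4) (q - 1 / 2)) / 2 := by
    funext q
    rw [invSqrtQuadratic, invSqrtQuadratic,
      show q ^ 2 + 2 * (q - 1 / 2) ^ 2 = 3 * (q - 1 / 2) ^ 2 + 1 * (q - 1 / 2) + 1 / 4 by ring,
      show (q - 1) ^ 2 + 2 * (q - 1 / 2) ^ 2 = 3 * (q - 1 / 2) ^ 2 + -1 * (q - 1 / 2) + 1 / 4 by
        ring]
    ring
  have hp : (1 : ℝ) ^ 2 < 3 := by norm_num
  have hm : (-1 : ℝ) ^ 2 < 3 := by norm_num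
  obtain ⟨p0, p1, p2, p3, p4⟩ := invSqrtQuadratic_taylor_at_zero hp
  obtain ⟨m0, m1, m2, m3, m4⟩ := invSqrtQuadratic_taylor_at_zero hm
  have hD {n : ℕ} (hn : 0 < n) := iteratedDeriv_const_sub_average_comp_sub_const
    (contDiff_invSqrtQuadratic (quadratic_three_quarter_pos hp))
    (contDiff_invSqrtQuadratic (quadratic_three_quarter_pos hm)) 2 (1 / 2) hn
  rw [hV]
  refine ⟨?_, ?_, ?_, ?_, ?_⟩
  · norm_num [p0, m0]
  · rw [← iteratedDeriv_one, hD one_pos]; simp only [iteratedDeriv_one, p1, m1]; norm_num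
  · rw [hD two_pos, p2, m2]; norm_num
  · rw [hD three_pos, p3, m3]; norm_num
  · rw [hD four_pos, p4, m4]; norm_num
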